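/- Let A₀ be a commutative ring with a nonzerodivisor t such that the pair (A₀,(t)) is preuniform, and let A₀ ↪ B₀ be an integral ring extension such that B₀ is t-torsion free. Then the induced map Â₀ → B̂₀ between t-adic completions is injective (and B̂₀ is t-torsion free). -/

import Mathlib

/-!
If the image of `a ∈ A₀` in `B₀` is `tⁿ⁺ᶜ b`, then `a / tⁿ⁺ᶜ ∈ A₀[1/t]` is a root of the monic
equation of `b` over `A₀`, hence integral, and preuniformity yields `tⁿ ∣ a`.
So the `t`-adic topology of `A₀` is the one induced from `B₀`, which makes `Â₀ → B̂₀` injective.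
Torsion-freeness of `B̂₀` is inherited from `B₀` through the isomorphisms `B₀/tⁿ ≅ B̂₀/tⁿ`.
-/

/-- `ι : R →+* C` realizes `C` as the `t`-adic completion of `R`:
`C` is `(ι t)`-adically complete (and separated), every element of `C` is
congruent to an element of `R` modulo each `(ι t)ⁿ·C`, and `ι` induces
injections `R/tⁿ → C/(ι t)ⁿ` for all `n`.  (For a nonzerodivisor—more
generally, finitely generated—ideal `(t)`, these properties characterize the
canonical map `R → lim_n R/tⁿR` up to canonical isomorphism.) -/
def IsAdicCompletionMap {R C : Type*} [CommRing R] [CommRing C]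
    (t : R) (ι : R →+* C) : Prop :=
  IsAdicComplete (Ideal.span {ι t}) C ∧
  (∀ n : ℕ, ∀ c : C, ∃ a : R, c - ι a ∈ Ideal.span {ι t} ^ n) ∧
  (∀ n : ℕ, ∀ a : R, ι a ∈ Ideal.span {ι t} ^ n → a ∈ Ideal.span {t} ^ n)

lemma Ideal.mem_span_singleton_pow {R : Type*} [CommRing R] {t x : R} {n : ℕ} :
    x ∈ Ideal.span {t} ^ n ↔ t ^ n ∣ x := by
  rw [Ideal.span_singleton_pow, Ideal.mem_span_singleton]

lemma IsHausdorff.eq_zero_of_forall_pow_dvd {R : Type*} [CommRing R] {t : R}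
    (h : IsHausdorff (Ideal.span {t}) R) {x : R} (hx : ∀ n, t ^ n ∣ x) : x = 0 :=
  h.haus x fun n => by
    rw [SModEq.zero, smul_eq_mul, Ideal.mul_top, Ideal.mem_span_singleton_pow]
    exact hx n

namespace IsAdicCompletionMap

variable {R C : Type*} [CommRing R] [CommRing C] {t : R} {ι : R →+* C}

lemma exists_pow_dvd_sub (h : IsAdicCompletionMap t ι) (n : ℕ) (x : C) :
    ∃ a : R, ι t ^ n ∣ x - ι a := by
  simpa only [Ideal.mem_span_singleton_pow] using h.2.1 n x

lemma pow_dvd_of_pow_dvd_map (h : IsAdicCompletionMap t ι) {n : ℕ} {a : R}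
    (ha : ι t ^ n ∣ ι a) : t ^ n ∣ a := by
  simpa only [Ideal.mem_span_singleton_pow] using h.2.2 n a (Ideal.mem_span_singleton_pow.2 ha)

lemma eq_zero_of_forall_pow_dvd (h : IsAdicCompletionMap t ι) {x : C}
    (hx : ∀ n, ι t ^ n ∣ x) : x = 0 :=
  h.1.toIsHausdorff.eq_zero_of_forall_pow_dvd hx

lemma eq_zero_of_mul_eq_zero (h : IsAdicCompletionMap t ι)
    (ht : ∀ b : R, t * b = 0 → b = 0) {x : C} (hx : ι t * x = 0) : x = 0 := by
  refine h.eq_zero_of_forall_pow_dvd fun n => ?_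
  obtain ⟨b, hb⟩ := h.exists_pow_dvd_sub n x
  have htb : ι t ^ (n + 1) ∣ ι (t * b) := by
    have : ι (t * b) = -(ι t * (x - ι b)) := by rw [map_mul, mul_sub, hx]; ring
    rw [this, dvd_neg, pow_succ']
    exact mul_dvd_mul_left _ hb
  obtain ⟨y, hy⟩ := h.pow_dvd_of_pow_dvd_map htb
  have hby : b = t ^ n * y := by
    refine sub_eq_zero.1 (ht _ ?_)
    rw [mul_sub, hy]
    ring
  simpa [hby] using dvd_add hb (dvd_mul_right (ι t ^ n) (ι y))

lemma injective_of_pow_dvd_map {S D : Type*} [CommRing S] [CommRing D]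
    {f : R →+* S} {κ : S →+* D} {φ : C →+* D}
    (hC : IsAdicCompletionMap t ι) (hD : IsAdicCompletionMap (f t) κ)
    (hφ : φ.comp ι = κ.comp f) (c : ℕ)
    (hc : ∀ n a, f t ^ (n + c) ∣ f a → t ^ n ∣ a) : Function.Injective φ := by
  have hφ' (a : R) : φ (ι a) = κ (f a) := RingHom.congr_fun hφ a
  refine (injective_iff_map_eq_zero φ).2 fun x hx => hC.eq_zero_of_forall_pow_dvd fun n => ?_
  obtain ⟨a, ha⟩ := hC.exists_pow_dvd_sub (n + c) x
  have hfa : f t ^ (n + c) ∣ f a := by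
    refine hD.pow_dvd_of_pow_dvd_map ?_
    have := map_dvd φ ha
    rwa [map_pow, map_sub, hx, zero_sub, dvd_neg, hφ', hφ'] at this
  have hιa : ι t ^ n ∣ ι a := by simpa only [map_pow] using map_dvd ι (hc n a hfa)
  simpa using dvd_add ((pow_dvd_pow _ (Nat.le_add_right n c)).trans ha) hιa

end IsAdicCompletionMap

lemma isIntegral_of_algebraMap_mul_eq {R B S : Type*} [CommRing R] [CommRing B] [CommRing S]
    [Algebra R B] [Algebra R S] (hinj : Function.Injective (algebraMap R B))
    {a s : R} {b : B} (hb : IsIntegral R b) (hab : algebraMap R B a = algebraMap R B s * b)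
    (hs : IsUnit (algebraMap R S s)) {x : S} (hx : algebraMap R S s * x = algebraMap R S a) :
    IsIntegral R x := by
  obtain ⟨p, hp, hpb⟩ := hb
  have hroot : (p.scaleRoots s).eval a = 0 := by
    apply hinj
    rw [map_zero, ← Polynomial.eval₂_at_apply, hab]
    exact Polynomial.scaleRoots_eval₂_eq_zero _ hpb
  refine ⟨p, hp, (hs.pow p.natDegree).mul_right_eq_zero.1 ?_⟩
  rw [← Polynomial.scaleRoots_eval₂_mul, hx, Polynomial.eval₂_at_apply, hroot, map_zero]

lemma pow_dvd_of_algebraMap_pow_add_dvd {A₀ B₀ A : Type*} [CommRing A₀] [CommRing B₀]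
    [CommRing A] [Algebra A₀ A] [Algebra A₀ B₀] [Algebra.IsIntegral A₀ B₀]
    {t : A₀} (ht : t ∈ nonZeroDivisors A₀) [IsLocalization.Away t A] {c : ℕ}
    (hpreuni : ∀ x : A, IsIntegral A₀ x → algebraMap A₀ A t ^ c * x ∈ (algebraMap A₀ A).range)
    (hinj : Function.Injective (algebraMap A₀ B₀)) {n : ℕ} {a : A₀}
    (ha : algebraMap A₀ B₀ t ^ (n + c) ∣ algebraMap A₀ B₀ a) : t ^ n ∣ a := by
  obtain ⟨b, hb⟩ := ha
  let s : Submonoid.powers t := ⟨t ^ (n + c), n + c, rfl⟩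
  let x : A := IsLocalization.mk' A a s
  have hx : algebraMap A₀ A (t ^ (n + c)) * x = algebraMap A₀ A a := by
    rw [mul_comm]
    exact IsLocalization.mk'_spec A a s
  have hxint : IsIntegral A₀ x :=
    isIntegral_of_algebraMap_mul_eq hinj (Algebra.IsIntegral.isIntegral b)
      (by rw [hb, map_pow]) (IsLocalization.map_units A s) hx
  obtain ⟨a₀, ha₀⟩ := hpreuni x hxint
  have heq : t ^ c * (t ^ n * a₀) = t ^ c * a := by
    apply IsLocalization.injective A (Submonoid.powers_le.2 ht)
    simp only [map_mul, map_pow, ha₀, ← hx]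
    ring
  exact ⟨a₀, ((mul_cancel_left_mem_nonZeroDivisors (pow_mem ht c)).1 heq).symm⟩

/-- Let `(A₀,(t))` be a preuniform pair (`t` a nonzerodivisor with
`t^c · (A₀)⁺_{A₀[1/t]} ⊆ A₀` for some `c > 0`), and let `A₀ ↪ B₀` be an integral
ring extension with `B₀` `t`-torsion free.  Then the induced map `Â₀ → B̂₀` of
`t`-adic completions is injective, and `B̂₀` is `t`-torsion free. -/
theorem stmt19 {A₀ B₀ A C D : Type*}
    [CommRing A₀] [CommRing B₀] [CommRing A] [CommRing C] [CommRing D]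
    [Algebra A₀ A] [Algebra A₀ B₀] [Algebra A₀ C] [Algebra B₀ D] [Algebra C D]
    [Algebra A₀ D] [IsScalarTower A₀ B₀ D] [IsScalarTower A₀ C D]
    (t : A₀) (ht : t ∈ nonZeroDivisors A₀)
    [IsLocalization.Away t A]
    (hpreuni : ∃ c : ℕ, 0 < c ∧ ∀ x : A, IsIntegral A₀ x →
      algebraMap A₀ A t ^ c * x ∈ (algebraMap A₀ A).range)
    (hinj : Function.Injective (algebraMap A₀ B₀))
    (hint : Algebra.IsIntegral A₀ B₀)
    (htf : ∀ x : B₀, algebraMap A₀ B₀ t * x = 0 → x = 0)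
    (hC : IsAdicCompletionMap t (algebraMap A₀ C))
    (hD : IsAdicCompletionMap (algebraMap A₀ B₀ t) (algebraMap B₀ D)) :
    Function.Injective (algebraMap C D) ∧
      ∀ x : D, algebraMap A₀ D t * x = 0 → x = 0 := by
  obtain ⟨c, -, hc⟩ := hpreuni
  have hcomm :
      (algebraMap C D).comp (algebraMap A₀ C) = (algebraMap B₀ D).comp (algebraMap A₀ B₀) := by
    rw [← IsScalarTower.algebraMap_eq, ← IsScalarTower.algebraMap_eq]
  exact ⟨hC.injective_of_pow_dvd_map hD hcomm c
      fun n a => pow_dvd_of_algebraMap_pow_add_dvd ht hc hinj,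
    fun x hx => hD.eq_zero_of_mul_eq_zero htf (by rwa [← IsScalarTower.algebraMap_apply])⟩
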